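/- Logarithmic geometric estimate in the plane: For every R > 0 there exists a constant C > 0, depending only on R, such that for all x, x' ∈ ℝ² and all unit vectors θ, θ' ∈ ℝ² with |θ' × θ| ≠ 0, one has ∫₀^∞ χ(x − tθ) · ( ∫_ℝ χ(x' + sθ') / |x − tθ − (x' + sθ')| ds ) dt ≤ C (1 − log|θ' × θ|), where χ is the indicator function of the closed disk {y ∈ ℝ² : |y| ≤ R} and θ' × θ := θ'₁θ₂ − θ'₂θ₁ (so that 0 < |θ' × θ| ≤ 1 and the right-hand side is positive). -/

import Mathlib

open MeasureTheory

/-- The indicator function of the closed disk of radius `R` in the plane. -/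
noncomputable def chiR (R : ℝ) : EuclideanSpace ℝ (Fin 2) → ℝ :=
  Set.indicator (Metric.closedBall (0 : EuclideanSpace ℝ (Fin 2)) R) fun _ => (1 : ℝ)

/-!
If the point `y = x - tθ` of the ray lies in the disk at distance `d > 0` from the line
`L(x', θ')`, then `‖y - (x' + sθ')‖ ≥ max d |s - s₀|` on that line, and `|s - s₀| ≤ 2R` whenever
`x' + sθ'` lies in the disk, so the inner integral is at most `2 (1 + log⁺ (2R / d))`. Along the
ray `d = |θ' × θ| · |t - p|`, hence
`log⁺ (2R / d) ≤ log⁺ (2R) - log |θ' × θ| + 2 |t - p| ^ (-1/2)`, and the last term has integral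
at most `8 √(2R)` over the `t`-interval of length `2R` cut out by the disk.
-/

open Real Set intervalIntegral
open scoped RealInnerProductSpace

/- For `x < 0`, `x ^ y = |x| ^ y * cos (y * π)` in Mathlib, which vanishes at `y = -1/2`; so
`|u| ^ (-1/2)` splits into two powers that `integral_rpow` computes exactly. -/
lemma rpow_eq_zero_of_neg_of_cos_eq_zero {x y : ℝ} (hx : x < 0) (hy : cos (y * π) = 0) :
    x ^ y = 0 := by
  rw [rpow_def_of_neg hx, hy, mul_zero]

lemma abs_rpow_eq_rpow_add_neg_rpow {y : ℝ} (hy : cos (y * π) = 0) (u : ℝ) :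
    |u| ^ y = u ^ y + (-u) ^ y := by
  rcases lt_trichotomy u 0 with h | rfl | h
  · rw [abs_of_neg h, rpow_eq_zero_of_neg_of_cos_eq_zero h hy, zero_add]
  · have hy0 : y ≠ 0 := by rintro rfl; simp at hy
    simp [zero_rpow hy0]
  · rw [abs_of_pos h, rpow_eq_zero_of_neg_of_cos_eq_zero (neg_neg_of_pos h) hy, add_zero]

lemma cos_neg_half_mul_pi : cos (-(1 / 2) * π) = 0 := by
  rw [neg_mul, cos_neg, one_div_mul_eq_div, cos_pi_div_two]

lemma intervalIntegrable_abs_rpow_neg_half (a b : ℝ) :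
    IntervalIntegrable (fun u : ℝ => |u| ^ (-(1 / 2) : ℝ)) volume a b := by
  have hr : (-1 : ℝ) < -(1 / 2) := by norm_num
  simp_rw [abs_rpow_eq_rpow_add_neg_rpow cos_neg_half_mul_pi]
  refine (intervalIntegrable_rpow' hr).add ?_
  simpa using (intervalIntegrable_rpow' hr (a := -a) (b := -b)).comp_sub_left 0

lemma integral_abs_rpow_neg_half (a b : ℝ) :
    ∫ u in a..b, |u| ^ (-(1 / 2) : ℝ) = 2 * ((√b - √a) + (√(-a) - √(-b))) := by
  have hr : (-1 : ℝ) < -(1 / 2) := by norm_num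
  simp_rw [abs_rpow_eq_rpow_add_neg_rpow cos_neg_half_mul_pi]
  rw [integral_add (intervalIntegrable_rpow' hr)
      (by simpa using (intervalIntegrable_rpow' hr (a := -a) (b := -b)).comp_sub_left 0),
    integral_comp_neg (fun u : ℝ => u ^ (-(1 / 2) : ℝ)), integral_rpow (Or.inl hr),
    integral_rpow (Or.inl hr)]
  simp only [sqrt_eq_rpow]
  norm_num
  ring

lemma sqrt_sub_sqrt_le {a b : ℝ} (h : a ≤ b) : √b - √a ≤ √(b - a) := by
  rw [sub_le_iff_le_add, sqrt_le_iff]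
  refine ⟨by positivity, ?_⟩
  nlinarith [sq_sqrt' (x := a), sq_sqrt (sub_nonneg.2 h), le_max_left a 0,
    mul_nonneg (sqrt_nonneg (b - a)) (sqrt_nonneg a)]

lemma integral_abs_sub_rpow_neg_half_le (p : ℝ) {a b : ℝ} (hab : a ≤ b) :
    ∫ t in a..b, |t - p| ^ (-(1 / 2) : ℝ) ≤ 4 * √(b - a) := by
  rw [integral_comp_sub_right (fun u => |u| ^ (-(1 / 2) : ℝ)), integral_abs_rpow_neg_half]
  have h₁ := sqrt_sub_sqrt_le (sub_le_sub_right hab p)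
  have h₂ := sqrt_sub_sqrt_le (neg_le_neg (sub_le_sub_right hab p))
  rw [sub_sub_sub_cancel_right] at h₁
  rw [neg_sub_neg, sub_sub_sub_cancel_right] at h₂
  linarith

lemma intervalIntegrable_abs_sub_rpow_neg_half (p a b : ℝ) :
    IntervalIntegrable (fun t : ℝ => |t - p| ^ (-(1 / 2) : ℝ)) volume a b := by
  simpa using (intervalIntegrable_abs_rpow_neg_half (a - p) (b - p)).comp_sub_right p

lemma posLog_le_rpow_div {x ε : ℝ} (hx : 0 ≤ x) (hε : 0 < ε) : log⁺ x ≤ x ^ ε / ε :=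
  max_le (by positivity) (log_le_rpow_div hx hε)

lemma posLog_div_abs_mul_le (r m u : ℝ) :
    log⁺ (r / |m * u|) ≤ log⁺ r + log⁺ |m|⁻¹ + 2 * |u| ^ (-(1 / 2) : ℝ) := by
  have hu : log⁺ |u|⁻¹ ≤ 2 * |u| ^ (-(1 / 2) : ℝ) := by
    have := posLog_le_rpow_div (inv_nonneg.2 (abs_nonneg u)) (one_half_pos (α := ℝ))
    rwa [inv_rpow (abs_nonneg u), ← rpow_neg (abs_nonneg u), div_eq_mul_inv, inv_div, div_one,
      mul_comm] at this
  calc log⁺ (r / |m * u|) = log⁺ (r * |m|⁻¹ * |u|⁻¹) := by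
        rw [abs_mul, div_eq_mul_inv, mul_inv, mul_assoc]
    _ ≤ log⁺ (r * |m|⁻¹) + log⁺ |u|⁻¹ := posLog_mul
    _ ≤ log⁺ r + log⁺ |m|⁻¹ + 2 * |u| ^ (-(1 / 2) : ℝ) := by
        gcongr
        exact posLog_mul

lemma integral_inv_max_le {d r : ℝ} (hd : 0 < d) (hr : 0 ≤ r) :
    ∫ u in 0..r, (max d u)⁻¹ ≤ 1 + log⁺ (r / d) := by
  have hint : ∀ a b, IntervalIntegrable (fun u : ℝ => (max d u)⁻¹) volume a b := fun a b =>
    (continuous_const.max continuous_id).inv₀ (fun u => (hd.trans_le (le_max_left d u)).ne')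
      |>.intervalIntegrable a b
  rcases le_total r d with hrd | hdr
  · have : ∫ u in 0..r, (max d u)⁻¹ = r / d := by
      rw [integral_congr (g := fun _ => d⁻¹) fun u hu => by
        rw [uIcc_of_le hr] at hu; simp only [max_eq_left (hu.2.trans hrd)]]
      simp [div_eq_mul_inv]
    rw [this]
    linarith [(div_le_one hd).2 hrd, posLog_nonneg (x := r / d)]
  · rw [← integral_add_adjacent_intervals (hint 0 d) (hint d r)]
    have h₁ : ∫ u in 0..d, (max d u)⁻¹ = 1 := by
      rw [integral_congr (g := fun _ => d⁻¹) fun u hu => by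
        rw [uIcc_of_le hd.le] at hu; simp only [max_eq_left hu.2]]
      simp [hd.ne']
    have h₂ : ∫ u in d..r, (max d u)⁻¹ = log (r / d) := by
      rw [integral_congr (g := fun u => u⁻¹) fun u hu => by
        rw [uIcc_of_le hdr] at hu; simp only [max_eq_right hu.1]]
      exact integral_inv_of_pos hd (hd.trans_le hdr)
    rw [h₁, h₂]
    linarith [show log (r / d) ≤ log⁺ (r / d) from le_max_right _ _]

lemma integral_inv_max_abs_le {d r : ℝ} (hd : 0 < d) (hr : 0 ≤ r) :
    ∫ u in -r..r, (max d |u|)⁻¹ ≤ 2 * (1 + log⁺ (r / d)) := by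
  have hint : ∀ a b, IntervalIntegrable (fun u : ℝ => (max d |u|)⁻¹) volume a b := fun a b =>
    (continuous_const.max continuous_abs).inv₀ (fun u => (hd.trans_le (le_max_left d _)).ne')
      |>.intervalIntegrable a b
  have hsymm : ∫ u in -r..0, (max d |u|)⁻¹ = ∫ u in 0..r, (max d |u|)⁻¹ := by
    simpa using (integral_comp_neg (a := 0) (b := r) fun u => (max d |u|)⁻¹).symm
  have hpos : ∫ u in 0..r, (max d |u|)⁻¹ = ∫ u in 0..r, (max d u)⁻¹ :=
    integral_congr fun u hu => by
      rw [uIcc_of_le hr] at hu; simp only [abs_of_nonneg hu.1]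
  rw [← integral_add_adjacent_intervals (hint _ 0) (hint 0 _), hsymm, hpos]
  linarith [integral_inv_max_le hd hr]

section InnerProductSpace

variable {E : Type*} [NormedAddCommGroup E] [InnerProductSpace ℝ E]

lemma abs_sub_inner_le_norm_sub_smul {e : E} (he : ‖e‖ = 1) (q : E) (s : ℝ) :
    |s - ⟪q, e⟫| ≤ ‖q - s • e‖ := by
  have := abs_real_inner_le_norm (q - s • e) e
  rwa [inner_sub_left, real_inner_smul_left, real_inner_self_eq_norm_sq, he, one_pow, mul_one,
    abs_sub_comm, mul_one] at this

lemma mem_Icc_of_norm_sub_smul_le {e q : E} (he : ‖e‖ = 1) {s r : ℝ} (h : ‖q - s • e‖ ≤ r) :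
    s ∈ Icc (⟪q, e⟫ - r) (⟪q, e⟫ + r) := by
  have := abs_le.1 ((abs_sub_inner_le_norm_sub_smul he q s).trans h)
  constructor <;> linarith

lemma max_abs_inner_le_norm_sub_smul {e n : E} (he : ‖e‖ = 1) (hn : ‖n‖ = 1) (hen : ⟪e, n⟫ = 0)
    (q : E) (s : ℝ) : max |⟪q, n⟫| |s - ⟪q, e⟫| ≤ ‖q - s • e‖ := by
  refine max_le ?_ (abs_sub_inner_le_norm_sub_smul he q s)
  have := abs_real_inner_le_norm (q - s • e) n
  rwa [inner_sub_left, real_inner_smul_left, hen, mul_zero, sub_zero, hn, mul_one] at this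

theorem integral_indicator_closedBall_div_norm_le {R : ℝ} {e n y z : E} (he : ‖e‖ = 1)
    (hn : ‖n‖ = 1) (hen : ⟪e, n⟫ = 0) (hy : ‖y‖ ≤ R) (hd : ⟪y - z, n⟫ ≠ 0) :
    ∫ s : ℝ, (Metric.closedBall (0 : E) R).indicator (fun _ => (1 : ℝ)) (z + s • e) /
        ‖y - (z + s • e)‖ ≤ 2 * (1 + log⁺ (2 * R / |⟪y - z, n⟫|)) := by
  set d := |⟪y - z, n⟫|
  set b := ⟪y - z, e⟫
  have hd₀ : 0 < d := abs_pos.2 hd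
  have hR : 0 ≤ R := (norm_nonneg y).trans hy
  set g : ℝ → ℝ := fun s => (max d |s - b|)⁻¹
  have hg : Continuous g :=
    (continuous_const.max (continuous_id.sub continuous_const).abs).inv₀
      fun s => (hd₀.trans_le (le_max_left _ _)).ne'
  have hpt : ∀ s : ℝ, (Metric.closedBall (0 : E) R).indicator (fun _ => (1 : ℝ)) (z + s • e) /
      ‖y - (z + s • e)‖ ≤ (Icc (b - 2 * R) (b + 2 * R)).indicator g s := by
    intro s
    by_cases hs : z + s • e ∈ Metric.closedBall (0 : E) R
    · have hq : y - (z + s • e) = (y - z) - s • e := by abel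
      have hnorm : ‖(y - z) - s • e‖ ≤ 2 * R := by
        rw [← hq]
        linarith [norm_sub_le y (z + s • e), mem_closedBall_zero_iff.1 hs]
      rw [indicator_of_mem hs, indicator_of_mem (mem_Icc_of_norm_sub_smul_le he hnorm), one_div,
        hq]
      exact inv_anti₀ (hd₀.trans_le (le_max_left _ _))
        (max_abs_inner_le_norm_sub_smul he hn hen (y - z) s)
    · rw [indicator_of_notMem hs, zero_div]
      exact indicator_nonneg (fun s _ => by positivity) s
  calc _ ≤ ∫ s, (Icc (b - 2 * R) (b + 2 * R)).indicator g s :=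
        integral_mono_of_nonneg
          (ae_of_all _ fun s => div_nonneg (indicator_nonneg (fun _ _ => zero_le_one) _)
            (norm_nonneg _))
          (hg.integrableOn_Icc.integrable_indicator measurableSet_Icc) (ae_of_all _ hpt)
    _ = ∫ u in -(2 * R)..2 * R, (max d |u|)⁻¹ := by
        rw [MeasureTheory.integral_indicator measurableSet_Icc, integral_Icc_eq_integral_Ioc,
          ← integral_of_le (by linarith), integral_comp_sub_right (fun u => (max d |u|)⁻¹)]
        congr 1 <;> ring
    _ ≤ 2 * (1 + log⁺ (2 * R / d)) := integral_inv_max_abs_le hd₀ (by positivity)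

lemma indicator_closedBall_mul_integral_le {R : ℝ} {θ e n : E} (x z : E) (hθ : ‖θ‖ = 1)
    (he : ‖e‖ = 1) (hn : ‖n‖ = 1) (hen : ⟪e, n⟫ = 0) (hθn : ⟪θ, n⟫ ≠ 0) {t : ℝ}
    (ht : t ≠ ⟪x - z, n⟫ / ⟪θ, n⟫) :
    (Metric.closedBall (0 : E) R).indicator (fun _ => (1 : ℝ)) (x - t • θ) *
        (∫ s : ℝ, (Metric.closedBall (0 : E) R).indicator (fun _ => (1 : ℝ)) (z + s • e) /
          ‖x - t • θ - (z + s • e)‖) ≤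
      (Icc (⟪x, θ⟫ - R) (⟪x, θ⟫ + R)).indicator (fun t => 2 * (1 + log⁺ (2 * R) +
        log⁺ |⟪θ, n⟫|⁻¹) + 4 * |t - ⟪x - z, n⟫ / ⟪θ, n⟫| ^ (-(1 / 2) : ℝ)) t := by
  set m := ⟪θ, n⟫
  set p := ⟪x - z, n⟫ / m
  by_cases hy : x - t • θ ∈ Metric.closedBall (0 : E) R
  · have hyR := mem_closedBall_zero_iff.1 hy
    have hd : ⟪x - t • θ - z, n⟫ = m * (p - t) := by
      rw [sub_right_comm, inner_sub_left, real_inner_smul_left, mul_sub, mul_div_cancel₀ _ hθn,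
        mul_comm]
    rw [indicator_of_mem hy, one_mul, indicator_of_mem (mem_Icc_of_norm_sub_smul_le hθ hyR)]
    calc _ ≤ 2 * (1 + log⁺ (2 * R / |⟪x - t • θ - z, n⟫|)) :=
          integral_indicator_closedBall_div_norm_le he hn hen hyR
            (by rw [hd]; exact mul_ne_zero hθn (sub_ne_zero.2 ht.symm))
      _ ≤ _ := by
          have := posLog_div_abs_mul_le (2 * R) m (p - t)
          rw [abs_sub_comm] at this
          rw [hd]
          linarith
  · rw [indicator_of_notMem hy, zero_mul]
    refine indicator_nonneg (fun t _ => ?_) t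
    have := posLog_nonneg (x := 2 * R)
    have := posLog_nonneg (x := |m|⁻¹)
    positivity

theorem setIntegral_Ioi_indicator_closedBall_mul_integral_le {R : ℝ} (hR : 0 ≤ R) {θ e n : E}
    (x z : E) (hθ : ‖θ‖ = 1) (he : ‖e‖ = 1) (hn : ‖n‖ = 1) (hen : ⟪e, n⟫ = 0)
    (hθn : ⟪θ, n⟫ ≠ 0) :
    (∫ t in Ioi (0 : ℝ), (Metric.closedBall (0 : E) R).indicator (fun _ => (1 : ℝ)) (x - t • θ) *
        ∫ s : ℝ, (Metric.closedBall (0 : E) R).indicator (fun _ => (1 : ℝ)) (z + s • e) /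
          ‖x - t • θ - (z + s • e)‖) ≤
      4 * R * (1 + log⁺ (2 * R) + log⁺ |⟪θ, n⟫|⁻¹) + 16 * √(2 * R) := by
  set a := ⟪x, θ⟫
  set p := ⟪x - z, n⟫ / ⟪θ, n⟫
  set A := 2 * (1 + log⁺ (2 * R) + log⁺ |⟪θ, n⟫|⁻¹)
  set G := (Icc (a - R) (a + R)).indicator fun t => A + 4 * |t - p| ^ (-(1 / 2) : ℝ)
  have hp : IntervalIntegrable (fun t : ℝ => |t - p| ^ (-(1 / 2) : ℝ)) volume (a - R) (a + R) :=
    intervalIntegrable_abs_sub_rpow_neg_half p _ _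
  have hG : Integrable G :=
    ((intervalIntegrable_iff_integrableOn_Icc_of_le (by linarith)).1
      (intervalIntegrable_const.add (hp.const_mul 4))).integrable_indicator measurableSet_Icc
  have hF₀ : ∀ t : ℝ, 0 ≤
      (Metric.closedBall (0 : E) R).indicator (fun _ => (1 : ℝ)) (x - t • θ) *
        ∫ s : ℝ, (Metric.closedBall (0 : E) R).indicator (fun _ => (1 : ℝ)) (z + s • e) /
          ‖x - t • θ - (z + s • e)‖ := fun t =>
    mul_nonneg (indicator_nonneg (fun _ _ => zero_le_one) _)
      (integral_nonneg fun s => div_nonneg (indicator_nonneg (fun _ _ => zero_le_one) _)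
        (norm_nonneg _))
  have hFG := (Measure.ae_ne volume p).mono fun t ht =>
    indicator_closedBall_mul_integral_le (R := R) x z hθ he hn hen hθn ht
  calc _ ≤ ∫ t in Ioi 0, G t :=
        integral_mono_of_nonneg (ae_of_all _ hF₀) hG.integrableOn (ae_restrict_of_ae hFG)
    _ ≤ ∫ t, G t := setIntegral_le_integral hG (hFG.mono fun t => (hF₀ t).trans)
    _ = 2 * R * A + 4 * ∫ t in (a - R)..(a + R), |t - p| ^ (-(1 / 2) : ℝ) := by
        rw [MeasureTheory.integral_indicator measurableSet_Icc, integral_Icc_eq_integral_Ioc,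
          ← integral_of_le (by linarith), integral_add intervalIntegrable_const (hp.const_mul 4),
          intervalIntegral.integral_const, intervalIntegral.integral_const_mul, smul_eq_mul]
        ring
    _ ≤ 2 * R * A + 4 * (4 * √(2 * R)) := by
        gcongr
        refine (integral_abs_sub_rpow_neg_half_le p (by linarith)).trans_eq ?_
        rw [show a + R - (a - R) = 2 * R by ring]
    _ = _ := by ring

end InnerProductSpace

noncomputable def perp (v : EuclideanSpace ℝ (Fin 2)) : EuclideanSpace ℝ (Fin 2) := !₂[-v 1, v 0]

lemma inner_perp (u v : EuclideanSpace ℝ (Fin 2)) : ⟪u, perp v⟫ = v 0 * u 1 - v 1 * u 0 := by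
  simp [perp, PiLp.inner_apply, Fin.sum_univ_two]
  ring

lemma norm_perp (v : EuclideanSpace ℝ (Fin 2)) : ‖perp v‖ = ‖v‖ := by
  simp [perp, EuclideanSpace.norm_eq, Fin.sum_univ_two, add_comm]

theorem log_geometric_estimate (R : ℝ) (hR : 0 < R) :
    ∃ C > (0 : ℝ), ∀ x x' θ θ' : EuclideanSpace ℝ (Fin 2),
      ‖θ‖ = 1 → ‖θ'‖ = 1 → θ' 0 * θ 1 - θ' 1 * θ 0 ≠ 0 →
      (∫ t in Set.Ioi (0 : ℝ), chiR R (x - t • θ) *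
          ∫ s : ℝ, chiR R (x' + s • θ') / ‖x - t • θ - (x' + s • θ')‖) ≤
        C * (1 - Real.log |θ' 0 * θ 1 - θ' 1 * θ 0|) := by
  refine ⟨4 * R * (1 + log⁺ (2 * R)) + 16 * √(2 * R),
    by nlinarith [posLog_nonneg (x := 2 * R), sqrt_nonneg (2 * R)], ?_⟩
  intro x x' θ θ' hθ hθ' hcross
  set m := θ' 0 * θ 1 - θ' 1 * θ 0
  have hm : ⟪θ, perp θ'⟫ = m := inner_perp θ θ'
  have hn : ‖perp θ'‖ = 1 := by rw [norm_perp, hθ']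
  have hm₁ : |m| ≤ 1 := by simpa [hm, hθ, hn] using abs_real_inner_le_norm θ (perp θ')
  have hL : log⁺ |m|⁻¹ = -log |m| := by
    have := posLog_sub_posLog_inv (x := |m|)
    rw [(posLog_eq_zero_iff _).2 (by rwa [abs_abs])] at this
    linarith
  have hL₀ : 0 ≤ -log |m| := neg_nonneg.2 (log_nonpos (abs_nonneg m) hm₁)
  have key := setIntegral_Ioi_indicator_closedBall_mul_integral_le hR.le x x' hθ hθ' hn
    (by rw [inner_perp]; ring) (hm ▸ hcross)
  rw [hm, hL] at key
  refine key.trans ?_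
  nlinarith [mul_nonneg (mul_nonneg hR.le (posLog_nonneg (x := 2 * R))) hL₀,
    mul_nonneg (sqrt_nonneg (2 * R)) hL₀]
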